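/- Glaisher's map, which sends a partition of n into odd parts to the partition of n into distinct parts whose parts are the numbers 2^j·m where m is odd and the binary representation of the multiplicity of m has a 1 in position j, is a bijection from the set of partitions of n into odd parts onto the set of partitions of n into distinct parts, and the number of parts of λ is always greater than or equal to the number of parts of its image. -/

import Mathlib

/-!
Write every positive integer uniquely as `2 ^ j * m` with `m` odd, and every multiplicity `c`
as the sum of `2 ^ j` over the binary digits `j` of `c`. Then `2 ^ j * m` is a part of `φ(λ)`
exactly when bit `j` of the multiplicity of `m` in `λ` is set, so `φ(λ)` has distinct parts and
determines every multiplicity of `λ`. Conversely, splitting each part `2 ^ j * m` of a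
partition into distinct parts into `2 ^ j` copies of `m` is a right inverse. The length bound is
the inequality `#{binary digits of c} ≤ c`.
-/

open Finset

/-- Glaisher's map on the multiset of parts: for each odd part value `m` with
multiplicity `c`, produce a part `2^j * m` for each position `j` holding a `1`
in the binary representation of `c`. -/
def glaisherParts (s : Multiset ℕ) : Multiset ℕ :=
  s.toFinset.val.bind fun m =>
    ((Finset.range (s.count m + 1)).filter fun j => (s.count m).testBit j).val.map
      fun j => 2 ^ j * m

namespace Nat

theorem factorization_two_pow_mul_odd {j m : ℕ} (hm : Odd m) :
    (2 ^ j * m).factorization 2 = j := by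
  rw [factorization_mul (by positivity) (by rintro rfl; simp at hm),
    Finsupp.add_apply, Prime.factorization_pow prime_two,
    factorization_eq_zero_of_not_dvd hm.not_two_dvd_nat]
  simp

theorem ordCompl_two_pow_mul_odd {j m : ℕ} (hm : Odd m) : ordCompl[2] (2 ^ j * m) = m := by
  rw [factorization_two_pow_mul_odd hm, Nat.mul_div_cancel_left _ (by positivity)]

theorem two_pow_mul_odd_inj {j k m m' : ℕ} (hm : Odd m) (hm' : Odd m')
    (h : 2 ^ j * m = 2 ^ k * m') : j = k ∧ m = m' := by
  have hjk : j = k := by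
    rw [← factorization_two_pow_mul_odd (j := j) hm, h, factorization_two_pow_mul_odd hm']
  subst hjk
  exact ⟨rfl, Nat.eq_of_mul_eq_mul_left (by positivity) h⟩

theorem filter_testBit_range (c : ℕ) :
    (range (c + 1)).filter (fun j => c.testBit j) = c.bitIndices.toFinset := by
  ext j
  simp only [mem_filter, mem_range, List.mem_toFinset, mem_bitIndices, and_iff_right_iff_imp]
  exact fun h => (j.lt_two_pow_self.trans_le (ge_two_pow_of_testBit h)).trans (lt_succ_self c)

theorem card_toFinset_bitIndices_le (c : ℕ) : #c.bitIndices.toFinset ≤ c := by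
  simpa using card_nsmul_le_sum c.bitIndices.toFinset (2 ^ ·) 1 fun j _ => Nat.one_le_two_pow

theorem testBit_sum_two_pow (J : Finset ℕ) (j : ℕ) :
    (∑ i ∈ J, 2 ^ i).testBit j ↔ j ∈ J := by
  conv_rhs => rw [← Finset.toFinset_bitIndices_sum_two_pow J]
  rw [List.mem_toFinset, mem_bitIndices]

end Nat

theorem Multiset.Nodup.ext_two_pow_mul_odd {s t : Multiset ℕ} (hs : s.Nodup) (ht : t.Nodup)
    (hs0 : 0 ∉ s) (ht0 : 0 ∉ t) (h : ∀ j m, Odd m → (2 ^ j * m ∈ s ↔ 2 ^ j * m ∈ t)) :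
    s = t := by
  refine (hs.ext ht).mpr fun q => ?_
  rcases eq_or_ne q 0 with rfl | hq
  · simp only [hs0, ht0]
  · obtain ⟨j, m, hm, rfl⟩ := Nat.exists_eq_two_pow_mul_odd hq
    exact h j m hm

theorem glaisherParts_eq_bind_bitIndices (s : Multiset ℕ) :
    glaisherParts s =
      s.toFinset.val.bind fun m => (s.count m).bitIndices.toFinset.val.map (2 ^ · * m) := by
  simp only [glaisherParts, Nat.filter_testBit_range]

theorem sum_glaisherParts (s : Multiset ℕ) : (glaisherParts s).sum = s.sum := by
  calc (glaisherParts s).sum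
      = ∑ m ∈ s.toFinset, ∑ j ∈ (s.count m).bitIndices.toFinset, 2 ^ j * m := by
        rw [glaisherParts_eq_bind_bitIndices, Multiset.sum_bind]
        rfl
    _ = ∑ m ∈ s.toFinset, s.count m • m := by
        simp_rw [← Finset.sum_mul, sum_toFinset_bitIndices_two_pow, smul_eq_mul]
    _ = s.sum := (Finset.sum_multiset_count s).symm

theorem card_glaisherParts_le (s : Multiset ℕ) :
    Multiset.card (glaisherParts s) ≤ Multiset.card s := by
  calc Multiset.card (glaisherParts s)
      = ∑ m ∈ s.toFinset, #(s.count m).bitIndices.toFinset := by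
        simp only [glaisherParts_eq_bind_bitIndices, Multiset.card_bind, Function.comp_def,
          Multiset.card_map]
        rfl
    _ ≤ ∑ m ∈ s.toFinset, s.count m := sum_le_sum fun m _ => Nat.card_toFinset_bitIndices_le _
    _ = Multiset.card s := Multiset.toFinset_sum_count_eq s

section GlaisherParts

variable {s : Multiset ℕ}

theorem mem_glaisherParts {q : ℕ} :
    q ∈ glaisherParts s ↔ ∃ m ∈ s, ∃ j, (s.count m).testBit j ∧ 2 ^ j * m = q := by
  simp only [glaisherParts_eq_bind_bitIndices, Multiset.mem_bind, Finset.mem_val,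
    Multiset.mem_toFinset, Multiset.mem_map, List.mem_toFinset, Nat.mem_bitIndices]

theorem pos_of_mem_glaisherParts (hs : ∀ x ∈ s, 0 < x) {q : ℕ} (hq : q ∈ glaisherParts s) :
    0 < q := by
  obtain ⟨m, hm, j, -, rfl⟩ := mem_glaisherParts.mp hq
  have := hs m hm
  positivity

theorem two_pow_mul_mem_glaisherParts (hs : ∀ x ∈ s, Odd x) {j m : ℕ} (hm : Odd m) :
    2 ^ j * m ∈ glaisherParts s ↔ (s.count m).testBit j := by
  refine mem_glaisherParts.trans ⟨?_, fun h => ⟨m, ?_, j, h, rfl⟩⟩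
  · rintro ⟨m', hm', j', h, heq⟩
    obtain ⟨rfl, rfl⟩ := Nat.two_pow_mul_odd_inj (hs m' hm') hm heq
    exact h
  · refine Multiset.count_ne_zero.mp fun h0 => ?_
    simp [h0] at h

theorem nodup_glaisherParts (hs : ∀ x ∈ s, Odd x) : (glaisherParts s).Nodup := by
  have hodd : ∀ m ∈ s.toFinset.val, Odd m := fun m hm => hs m (Multiset.mem_toFinset.mp hm)
  rw [glaisherParts_eq_bind_bitIndices, Multiset.nodup_bind]
  refine ⟨fun m hm => (Finset.nodup _).map fun j k h => ?_, ?_⟩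
  · exact (Nat.two_pow_mul_odd_inj (hodd m hm) (hodd m hm) h).1
  · refine s.toFinset.nodup.pairwise fun m hm m' hm' hne => Multiset.disjoint_left.mpr ?_
    simp only [Multiset.mem_map]
    rintro _ ⟨j, -, rfl⟩ ⟨j', -, heq⟩
    exact hne (Nat.two_pow_mul_odd_inj (hodd m' hm') (hodd m hm) heq).2.symm

end GlaisherParts

theorem glaisherParts_injOn : Set.InjOn glaisherParts {s | ∀ x ∈ s, Odd x} := by
  intro s hs s' hs' h
  ext m
  by_cases hm : Odd m
  · refine Nat.eq_of_testBit_eq fun j => ?_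
    rw [Bool.eq_iff_iff, ← two_pow_mul_mem_glaisherParts hs hm,
      ← two_pow_mul_mem_glaisherParts hs' hm, h]
  · rw [Multiset.count_eq_zero.mpr (mt (hs m) hm), Multiset.count_eq_zero.mpr (mt (hs' m) hm)]

def glaisherInvParts (t : Multiset ℕ) : Multiset ℕ :=
  t.bind fun p => Multiset.replicate (ordProj[2] p) (ordCompl[2] p)

section GlaisherInvParts

variable {t : Multiset ℕ}

theorem odd_of_mem_glaisherInvParts (ht : ∀ p ∈ t, 0 < p) {q : ℕ}
    (hq : q ∈ glaisherInvParts t) : Odd q := by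
  obtain ⟨p, hp, hq⟩ := Multiset.mem_bind.mp hq
  rw [Multiset.eq_of_mem_replicate hq]
  exact Nat.not_even_iff_odd.mp fun he =>
    Nat.not_dvd_ordCompl Nat.prime_two (ht p hp).ne' he.two_dvd

theorem sum_glaisherInvParts (t : Multiset ℕ) : (glaisherInvParts t).sum = t.sum := by
  simp only [glaisherInvParts, Multiset.sum_bind, Multiset.sum_replicate, smul_eq_mul,
    Nat.ordProj_mul_ordCompl_eq_self, Multiset.map_id']

theorem count_glaisherInvParts (ht : t.Nodup) (m : ℕ) :
    (glaisherInvParts t).count m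
      = ∑ i ∈ {p ∈ t.toFinset | ordCompl[2] p = m}.image (·.factorization 2), 2 ^ i := by
  rw [Finset.sum_image, Finset.sum_filter]
  · rw [glaisherInvParts, Multiset.count_bind, Finset.sum, Multiset.toFinset_val, ht.dedup]
    simp only [Multiset.count_replicate]
  · intro p hp q hq hpq
    rw [Finset.mem_coe, Finset.mem_filter] at hp hq
    rw [← Nat.ordProj_mul_ordCompl_eq_self p 2, ← Nat.ordProj_mul_ordCompl_eq_self q 2,
      hp.2, hq.2, show p.factorization 2 = q.factorization 2 from hpq]

theorem testBit_count_glaisherInvParts (ht : t.Nodup) {m : ℕ} (hm : Odd m) (j : ℕ) :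
    ((glaisherInvParts t).count m).testBit j ↔ 2 ^ j * m ∈ t := by
  rw [count_glaisherInvParts ht, Nat.testBit_sum_two_pow, Finset.mem_image]
  constructor
  · rintro ⟨p, hp, rfl⟩
    rw [Finset.mem_filter, Multiset.mem_toFinset] at hp
    rw [← hp.2, Nat.ordProj_mul_ordCompl_eq_self]
    exact hp.1
  · exact fun h => ⟨2 ^ j * m, by simp [h, Nat.ordCompl_two_pow_mul_odd hm],
      Nat.factorization_two_pow_mul_odd hm⟩

end GlaisherInvParts

theorem glaisherParts_glaisherInvParts {t : Multiset ℕ} (ht : t.Nodup)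
    (ht0 : ∀ p ∈ t, 0 < p) : glaisherParts (glaisherInvParts t) = t := by
  have hodd : ∀ q ∈ glaisherInvParts t, Odd q := fun _ => odd_of_mem_glaisherInvParts ht0
  refine (nodup_glaisherParts hodd).ext_two_pow_mul_odd ht
    (fun h => (pos_of_mem_glaisherParts (fun q hq => (hodd q hq).pos) h).ne rfl)
    (fun h => (ht0 0 h).ne rfl) fun j m hm => ?_
  rw [two_pow_mul_mem_glaisherParts hodd hm, testBit_count_glaisherInvParts ht hm]

namespace Nat.Partition

variable {n : ℕ}

theorem mem_odds_iff {P : n.Partition} : P ∈ odds n ↔ ∀ x ∈ P.parts, Odd x := by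
  simp [odds, restricted]

theorem mem_distincts_iff {Q : n.Partition} : Q ∈ distincts n ↔ Q.parts.Nodup := by
  simp [distincts]

def glaisher (P : n.Partition) : n.Partition where
  parts := glaisherParts P.parts
  parts_pos := pos_of_mem_glaisherParts fun _ => P.parts_pos
  parts_sum := (sum_glaisherParts _).trans P.parts_sum

def glaisherInv (Q : n.Partition) : n.Partition where
  parts := glaisherInvParts Q.parts
  parts_pos h := (odd_of_mem_glaisherInvParts (fun _ => Q.parts_pos) h).pos
  parts_sum := (sum_glaisherInvParts _).trans Q.parts_sum

theorem glaisher_mem_distincts {P : n.Partition} (hP : P ∈ odds n) : P.glaisher ∈ distincts n :=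
  mem_distincts_iff.mpr (nodup_glaisherParts (mem_odds_iff.mp hP))

theorem glaisherInv_mem_odds (Q : n.Partition) : Q.glaisherInv ∈ odds n :=
  mem_odds_iff.mpr fun _ => odd_of_mem_glaisherInvParts fun _ => Q.parts_pos

theorem glaisher_glaisherInv {Q : n.Partition} (hQ : Q ∈ distincts n) :
    Q.glaisherInv.glaisher = Q :=
  Nat.Partition.ext <|
    glaisherParts_glaisherInvParts (mem_distincts_iff.mp hQ) fun _ => Q.parts_pos

theorem glaisher_injOn : Set.InjOn (glaisher (n := n)) (odds n) := fun _ hP _ hP' h =>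
  Nat.Partition.ext (glaisherParts_injOn (mem_odds_iff.mp hP) (mem_odds_iff.mp hP')
    (congrArg parts h))

end Nat.Partition

theorem glaisher_bijection_general (n : ℕ) :
    (∀ P ∈ Nat.Partition.odds n,
        (glaisherParts P.parts).sum = n ∧
        (glaisherParts P.parts).Nodup ∧
        (∀ p ∈ glaisherParts P.parts, 0 < p) ∧
        Multiset.card (glaisherParts P.parts) ≤ Multiset.card P.parts) ∧
      (∀ P ∈ Nat.Partition.odds n, ∃ Q ∈ Nat.Partition.distincts n,
        Q.parts = glaisherParts P.parts) ∧
      (∀ Q ∈ Nat.Partition.distincts n, ∃! P, P ∈ Nat.Partition.odds n ∧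
        glaisherParts P.parts = Q.parts) := by
  refine ⟨fun P hP => ?_,
    fun P hP => ⟨P.glaisher, Nat.Partition.glaisher_mem_distincts hP, rfl⟩,
    fun Q hQ => ⟨Q.glaisherInv, ⟨Q.glaisherInv_mem_odds, ?_⟩, ?_⟩⟩
  · exact ⟨P.glaisher.parts_sum,
      Nat.Partition.mem_distincts_iff.mp (Nat.Partition.glaisher_mem_distincts hP),
      fun _ => P.glaisher.parts_pos, card_glaisherParts_le _⟩
  · exact congrArg Nat.Partition.parts (Nat.Partition.glaisher_glaisherInv hQ)
  · rintro P ⟨hP, hPQ⟩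
    exact Nat.Partition.glaisher_injOn hP Q.glaisherInv_mem_odds
      ((Nat.Partition.ext hPQ).trans (Nat.Partition.glaisher_glaisherInv hQ).symm)

theorem glaisher_bijection (n : ℕ) (hn : 0 < n) :
    (∀ P ∈ Nat.Partition.odds n,
        (glaisherParts P.parts).sum = n ∧
        (glaisherParts P.parts).Nodup ∧
        (∀ p ∈ glaisherParts P.parts, 0 < p) ∧
        Multiset.card (glaisherParts P.parts) ≤ Multiset.card P.parts) ∧
      (∀ P ∈ Nat.Partition.odds n, ∃ Q ∈ Nat.Partition.distincts n,
        Q.parts = glaisherParts P.parts) ∧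
      (∀ Q ∈ Nat.Partition.distincts n, ∃! P, P ∈ Nat.Partition.odds n ∧
        glaisherParts P.parts = Q.parts) :=
  glaisher_bijection_general n
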